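/- arXiv:physics/0412157 — 2 statements merged into one kernel-verified Lean document; each statement's English description precedes it below -/
import Mathlib

section
/- Let d ≥ 1, ω ∈ ℝ^d, and let A : ℝ → ℝ^{3×3} be continuous with skew-symmetric values. Let Φ : ℝ → ℝ^{3×3} solve Φ'(θ) = A(θ)Φ(θ), Φ(0) = I. Suppose U, Û : ℝ → SO(3) are entrywise quasiperiodic with tune vector (1,ω) ∈ ℝ^{d+1} and ν, ν̂ ∈ [0,1) are such that Φ(θ) = U(θ) exp(𝒥νθ) U(0)ᵀ = Û(θ) exp(𝒥ν̂θ) Û(0)ᵀ for all θ ∈ ℝ. Then there exist ε ∈ {−1, 1} and m ∈ ℤ^{d+1} such that ν̂ = εν + m·(1,ω). -/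
open MeasureTheory Filter
noncomputable section

/-- The matrix 𝒥: (2,1)-entry 1, (1,2)-entry −1, all other entries 0. -/
def Jmat : Matrix (Fin 3) (Fin 3) ℝ := Matrix.of ![![0, -1, 0], ![1, 0, 0], ![0, 0, 0]]

/-- The special orthogonal group SO(3): RᵀR = I and det R = 1. -/
def SO3 : Set (Matrix (Fin 3) (Fin 3) ℝ) := {R | R.transpose * R = 1 ∧ R.det = 1}

/-- 2π-periodicity in each of the k arguments. -/
def Periodic2Pi {k : ℕ} {E : Type*} (F : (Fin k → ℝ) → E) : Prop :=
  ∀ (z : Fin k → ℝ) (i : Fin k), F (Function.update z i (z i + 2 * Real.pi)) = F z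

/-- `f : ℝ → E` is quasiperiodic with tune vector `ν ∈ ℝ^k` if `f θ = F (νθ)` for a
continuous `F` that is 2π-periodic in each argument. -/
def IsQuasiperiodic {E : Type*} [TopologicalSpace E] {k : ℕ} (ν : Fin k → ℝ) (f : ℝ → E) : Prop :=
  ∃ F : (Fin k → ℝ) → E, Continuous F ∧ Periodic2Pi F ∧ ∀ θ : ℝ, f θ = F fun i => ν i * θ

/-- integer dot product `m · v` -/
def zdot {k : ℕ} (m : Fin k → ℤ) (v : Fin k → ℝ) : ℝ := ∑ i, (m i : ℝ) * v i

/-- `ν` is nonresonant if `m · ν = 0` only for `m = 0`. -/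
def Nonresonant {k : ℕ} (ν : Fin k → ℝ) : Prop :=
  ∀ m : Fin k → ℤ, zdot m ν = 0 → m = 0

/-- Fourier coefficient `F_m = (2π)^{-k} ∫_{[0,2π]^k} F(z) e^{-i m·z} dz`. -/
def mFourierCoeff {k : ℕ} (F : (Fin k → ℝ) → ℂ) (m : Fin k → ℤ) : ℂ :=
  ((2 * Real.pi) ^ k : ℝ)⁻¹ •
    ∫ z in Set.Icc (0 : Fin k → ℝ) (fun _ => 2 * Real.pi),
      F z * Complex.exp (-Complex.I * ∑ i, (m i : ℝ) * z i)

/-- The phase space `ℝ × ℝ^d` of pairs `(θ, φ)`. -/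
abbrev Pt (d : ℕ) := ℝ × (Fin d → ℝ)

/-- The vector `(1, ω) ∈ ℝ^{d+1}`. -/
def oneOmega {d : ℕ} (ω : Fin d → ℝ) : Fin (d + 1) → ℝ := Fin.cons 1 ω

/-- max norm `‖m‖ = max_i |m_i|` of an integer vector. -/
def intNorm {k : ℕ} (m : Fin k → ℤ) : ℕ := Finset.univ.sup fun i => (m i).natAbs

/-- The Diophantine set `Ω(τ) = ⋃_{γ ∈ (0,1]} Ω(τ,γ)` where
`Ω(τ,γ) = {ω : |m·(1,ω)| ≥ γ‖m‖^{-τ} for all nonzero m ∈ ℤ^{d+1}}`. -/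
def DiophSet (d : ℕ) (τ : ℝ) : Set (Fin d → ℝ) :=
  ⋃ γ ∈ Set.Ioc (0 : ℝ) 1,
    {ω | ∀ m : Fin (d + 1) → ℤ, m ≠ 0 → γ * (intNorm m : ℝ) ^ (-τ) ≤ |zdot m (oneOmega ω)|}

/-- The derivation 𝒟 applied to the entries of a matrix-valued function:
`(𝒟V)(p) = ∂_θ V + ω·∇_φ V`, i.e. the directional derivative along `(1, ω)`. -/
def Dmat {d : ℕ} (ω : Fin d → ℝ) (V : Pt d → Matrix (Fin 3) (Fin 3) ℝ) (p : Pt d) :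
    Matrix (Fin 3) (Fin 3) ℝ :=
  Matrix.of fun i j => fderiv ℝ (fun q => V q i j) p (1, ω)

/-- Periodicity: 2π-periodic in θ and in each component of φ. -/
def PeriodicPt {d : ℕ} {E : Type*} (f : Pt d → E) : Prop :=
  (∀ p : Pt d, f (p.1 + 2 * Real.pi, p.2) = f p) ∧
  (∀ (p : Pt d) (i : Fin d), f (p.1, Function.update p.2 i (p.2 i + 2 * Real.pi)) = f p)

/-- A matrix-valued map on `ℝ × ℝ^d` is of class `C^n` (entrywise). -/
def SmoothMat {d : ℕ} (n : ℕ∞) (V : Pt d → Matrix (Fin 3) (Fin 3) ℝ) : Prop :=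
  ∀ i j, ContDiff ℝ n fun p => V p i j

/-- `Φ` is the principal solution matrix at `φ₀`:
`∂_θ Φ(θ) = 𝒜(θ, ωθ + φ₀) Φ(θ)`, `Φ(0) = I`. -/
def IsPrincipalSolution {d : ℕ} (ω : Fin d → ℝ) (𝒜 : Pt d → Matrix (Fin 3) (Fin 3) ℝ)
    (φ₀ : Fin d → ℝ) (Φ : ℝ → Matrix (Fin 3) (Fin 3) ℝ) : Prop :=
  Φ 0 = 1 ∧ ∀ (θ : ℝ) (i j : Fin 3),
    HasDerivAt (fun t => Φ t i j) ((𝒜 (θ, fun l => ω l * θ + φ₀ l) * Φ θ) i j) θ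

/-- A uniform invariant frame field: C¹, 2π-periodic, SO(3)-valued, satisfying
`𝒟𝒱 = 𝒜𝒱 − ν𝒱𝒥` for a constant `ν ∈ [0,1)`. -/
def IsUniformIFF {d : ℕ} (ω : Fin d → ℝ) (𝒜 V : Pt d → Matrix (Fin 3) (Fin 3) ℝ) (ν : ℝ) :
    Prop :=
  SmoothMat 1 V ∧ PeriodicPt V ∧ (∀ p, V p ∈ SO3) ∧ ν ∈ Set.Ico (0 : ℝ) 1 ∧
  ∀ p, Dmat ω V p = 𝒜 p * V p - ν • (V p * Jmat)

/-- An invariant frame field: C¹, 2π-periodic, SO(3)-valued, whose third column 𝔳³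
satisfies `𝒟𝔳³ = 𝒜𝔳³`. -/
def IsIFF {d : ℕ} (ω : Fin d → ℝ) (𝒜 V : Pt d → Matrix (Fin 3) (Fin 3) ℝ) : Prop :=
  SmoothMat 1 V ∧ PeriodicPt V ∧ (∀ p, V p ∈ SO3) ∧
  ∀ (p : Pt d) (i : Fin 3),
    fderiv ℝ (fun q => V q i 2) p (1, ω) = ((𝒜 p).mulVec fun j => V p j 2) i

/-- An invariant spin field: C¹, 2π-periodic, unit length, satisfying `𝒟n = 𝒜n`. -/
def IsISF {d : ℕ} (ω : Fin d → ℝ) (𝒜 : Pt d → Matrix (Fin 3) (Fin 3) ℝ)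
    (n : Pt d → Fin 3 → ℝ) : Prop :=
  (∀ i, ContDiff ℝ 1 fun p => n p i) ∧ PeriodicPt n ∧ (∀ p, ∑ i, n p i ^ 2 = 1) ∧
  ∀ (p : Pt d) (i : Fin 3), fderiv ℝ (fun q => n q i) p (1, ω) = ((𝒜 p).mulVec (n p)) i

/-- cross product on ℝ³ -/
def cross3 (u v : Fin 3 → ℝ) : Fin 3 → ℝ :=
  ![u 1 * v 2 - u 2 * v 1, u 2 * v 0 - u 0 * v 2, u 0 * v 1 - u 1 * v 0]

/-- Euclidean norm on ℝ³ -/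
def nrm3 (v : Fin 3 → ℝ) : ℝ := Real.sqrt (∑ i, v i ^ 2)

/-- normalization of a vector in ℝ³ -/
def unitize (v : Fin 3 → ℝ) : Fin 3 → ℝ := fun i => v i / nrm3 v

/-- the matrix with columns a, b, c -/
def colMat (a b c : Fin 3 → ℝ) : Matrix (Fin 3) (Fin 3) ℝ := (Matrix.of ![a, b, c]).transpose

/-!
Write `W θ = Û(θ)ᵀ U(θ)`. Since `exp (s 𝒥)` is the rotation `R s` about the third axis, the two
representations of `Φ` give `W θ = R (ν̂ θ) C R (-ν θ)` with `C = Û(0)ᵀ U(0)` orthogonal. In the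
complex coordinates `z₊, z₋` of the upper left `2 × 2` block this reads
`z₊ (W θ) = z₊ C · e^{i(ν̂-ν)θ}` and `z₋ (W θ) = z₋ C · e^{i(ν̂+ν)θ}`, and `z₊ C`, `z₋ C` cannot both
vanish because the first two columns of `C` are orthonormal. Both functions are quasiperiodic with
tune `(1, ω)`, so it remains to see that a quasiperiodic `z e^{iαθ} = G(νθ)` with `z ≠ 0` forces
`α = m · ν` for some `m ∈ ℤᵏ`: its twisted means `T⁻¹ ∫₀ᵀ G(νθ) e^{-iαθ} dθ` all equal `z`, whereas
for every trigonometric polynomial in place of `G` they tend to `0` when `α` is nonresonant, and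
trigonometric polynomials are uniformly dense in `C(𝕋ᵏ)`.
-/

open Real

def rotZ (s : ℝ) : Matrix (Fin 3) (Fin 3) ℝ := !![cos s, -sin s, 0; sin s, cos s, 0; 0, 0, 1]

section RotZ

lemma rotZ_zero : rotZ 0 = 1 := by
  simp [rotZ, Matrix.one_fin_three]

lemma rotZ_neg_mul_rotZ (s : ℝ) : rotZ (-s) * rotZ s = 1 := by
  ext i j
  fin_cases i <;> fin_cases j <;>
    simp [rotZ, Matrix.mul_apply, Fin.sum_univ_three] <;> nlinarith [sin_sq_add_cos_sq s]

lemma rotZ_mul_rotZ_neg (s : ℝ) : rotZ s * rotZ (-s) = 1 := by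
  simpa using rotZ_neg_mul_rotZ (-s)

lemma rotZ_eq_one_add (s : ℝ) : rotZ s = 1 + sin s • Jmat + (1 - cos s) • (Jmat * Jmat) := by
  ext i j
  fin_cases i <;> fin_cases j <;> simp [rotZ, Jmat]

lemma rotZ_mul_Jmat (s : ℝ) : rotZ s * Jmat = cos s • Jmat + sin s • (Jmat * Jmat) := by
  ext i j
  fin_cases i <;> fin_cases j <;> simp [rotZ, Jmat, Matrix.mul_apply, Fin.sum_univ_three]

-- `NormedSpace.exp` does not depend on the norm; any normed algebra structure on matrices lets
-- us differentiate it.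
attribute [local instance] Matrix.linftyOpNormedAddCommGroup Matrix.linftyOpSemiNormedRing
  Matrix.linftyOpNormedRing Matrix.linftyOpNormedAlgebra

lemma hasDerivAt_rotZ (s : ℝ) : HasDerivAt rotZ (rotZ s * Jmat) s := by
  have h := (((hasDerivAt_sin s).smul_const Jmat).const_add 1).add
    (((hasDerivAt_cos s).const_sub 1).smul_const (Jmat * Jmat))
  rw [neg_neg, ← rotZ_mul_Jmat] at h
  exact h.congr_of_eventuallyEq (.of_forall rotZ_eq_one_add)

lemma exp_smul_Jmat (s : ℝ) : NormedSpace.exp (s • Jmat) = rotZ s := by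
  have hderiv (t : ℝ) : HasDerivAt (fun u => rotZ (-u) * NormedSpace.exp (u • Jmat)) 0 t := by
    have h := ((hasDerivAt_rotZ (-t)).scomp t (hasDerivAt_neg t)).mul
      (hasDerivAt_exp_smul_const (𝕂 := ℝ) Jmat t)
    have hcomm : NormedSpace.exp (t • Jmat) * Jmat = Jmat * NormedSpace.exp (t • Jmat) :=
      ((Commute.refl Jmat).smul_left t).exp_left
    refine h.congr_deriv ?_
    -- restated with the plain matrix product, for which `hcomm` is stated
    show -1 • (rotZ (-t) * Jmat) * NormedSpace.exp (t • Jmat)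
      + rotZ (-t) * (NormedSpace.exp (t • Jmat) * Jmat) = 0
    rw [hcomm, neg_one_smul, neg_mul, Matrix.mul_assoc, ← Matrix.mul_assoc, neg_add_cancel]
  have hconst := is_const_of_deriv_eq_zero (fun u => (hderiv u).differentiableAt)
    (fun u => (hderiv u).deriv) s 0
  simp only [neg_zero, zero_smul, NormedSpace.exp_zero, rotZ_zero, Matrix.mul_one] at hconst
  calc NormedSpace.exp (s • Jmat) = rotZ s * (rotZ (-s) * NormedSpace.exp (s • Jmat)) := by
        rw [← Matrix.mul_assoc, rotZ_mul_rotZ_neg, Matrix.one_mul]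
    _ = rotZ s := by rw [hconst, Matrix.mul_one]

end RotZ

lemma mul_eq_mul_mul_of_mul_mul_eq {M : Type*} [Monoid M] {U U₀ U₀' V V' V₀' R R' S : M}
    (hV : V' * V = 1) (hU₀ : U₀' * U₀ = 1) (hR : R * R' = 1)
    (h : U * R * U₀' = V * S * V₀') : V' * U = S * (V₀' * U₀) * R' :=
  calc V' * U = V' * (U * R * U₀') * U₀ * R' := by simp only [mul_assoc, hU₀, mul_one, hR]
    _ = S * (V₀' * U₀) * R' := by rw [h]; simp only [← mul_assoc, hV, one_mul]

lemma transpose_mul_transpose_mul_self {n R : Type*} [Fintype n] [DecidableEq n] [CommRing R]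
    {U V : Matrix n n R} (hV : V.transpose * V = 1) (hU : U.transpose * U = 1) :
    (V.transpose * U).transpose * (V.transpose * U) = 1 := by
  rw [Matrix.transpose_mul, Matrix.transpose_transpose, Matrix.mul_assoc,
    ← Matrix.mul_assoc V, mul_eq_one_comm.mp hV, Matrix.one_mul, hU]

open Complex Topology

section ComplexCoordinates

-- The upper left `2 × 2` block of `M` acts on `ℂ` as `w ↦ (zPlus M * w + zMinus M * conj w) / 2`.
def zPlus (M : Matrix (Fin 3) (Fin 3) ℝ) : ℂ := ⟨M 0 0 + M 1 1, M 1 0 - M 0 1⟩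

def zMinus (M : Matrix (Fin 3) (Fin 3) ℝ) : ℂ := ⟨M 0 0 - M 1 1, M 1 0 + M 0 1⟩

lemma continuous_zPlus : Continuous zPlus :=
  equivRealProdCLM.symm.continuous.comp
    (f := fun M : Matrix (Fin 3) (Fin 3) ℝ => (M 0 0 + M 1 1, M 1 0 - M 0 1)) (by fun_prop)

lemma continuous_zMinus : Continuous zMinus :=
  equivRealProdCLM.symm.continuous.comp
    (f := fun M : Matrix (Fin 3) (Fin 3) ℝ => (M 0 0 - M 1 1, M 1 0 + M 0 1)) (by fun_prop)

lemma zPlus_rotZ_mul_mul_rotZ (M : Matrix (Fin 3) (Fin 3) ℝ) (a b : ℝ) :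
    zPlus (rotZ a * M * rotZ (-b)) = zPlus M * exp (↑(a - b) * I) := by
  apply Complex.ext <;>
    simp only [mul_re, mul_im, exp_ofReal_mul_I_re, exp_ofReal_mul_I_im] <;>
    simp [zPlus, rotZ, Matrix.mul_apply, Fin.sum_univ_three, Matrix.vecMul, dotProduct,
      Real.cos_sub, Real.sin_sub] <;>
    ring

lemma zMinus_rotZ_mul_mul_rotZ (M : Matrix (Fin 3) (Fin 3) ℝ) (a b : ℝ) :
    zMinus (rotZ a * M * rotZ (-b)) = zMinus M * exp (↑(a + b) * I) := by
  apply Complex.ext <;>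
    simp only [mul_re, mul_im, exp_ofReal_mul_I_re, exp_ofReal_mul_I_im] <;>
    simp [zMinus, rotZ, Matrix.mul_apply, Fin.sum_univ_three, Matrix.vecMul, dotProduct,
      Real.cos_add, Real.sin_add] <;>
    ring

lemma zPlus_ne_zero_or_zMinus_ne_zero {M : Matrix (Fin 3) (Fin 3) ℝ}
    (hM : M.transpose * M = 1) : zPlus M ≠ 0 ∨ zMinus M ≠ 0 := by
  by_contra! h
  obtain ⟨hp, hm⟩ := h
  have hentry (i j : Fin 3) : ∑ k, M k i * M k j = (1 : Matrix (Fin 3) (Fin 3) ℝ) i j := by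
    simpa [Matrix.mul_apply] using congrFun (congrFun hM i) j
  have h00 := hentry 0 0
  have h11 := hentry 1 1
  have h01 := hentry 0 1
  norm_num [Fin.sum_univ_three, Matrix.one_apply] at h00 h11 h01
  simp only [zPlus, zMinus, Complex.ext_iff, zero_re, zero_im] at hp hm
  have hblock : M 0 0 = 0 ∧ M 1 1 = 0 ∧ M 1 0 = 0 ∧ M 0 1 = 0 := by
    refine ⟨?_, ?_, ?_, ?_⟩ <;> linarith [hp.1, hp.2, hm.1, hm.2]
  simp only [hblock, mul_zero, zero_add] at h00 h11 h01
  nlinarith [h00, h11, h01]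

end ComplexCoordinates

section Quasiperiodic

variable {k : ℕ}

lemma Periodic2Pi.apply_add_intCast_mul {E : Type*} {F : (Fin k → ℝ) → E} (hF : Periodic2Pi F)
    (z : Fin k → ℝ) (n : Fin k → ℤ) : F (z + fun i => n i * (2 * π)) = F z := by
  let periods : AddSubgroup (Fin k → ℝ) :=
    { carrier := {v | ∀ z, F (z + v) = F z}
      add_mem' := fun hv hw z => by rw [← add_assoc, hw, hv]
      zero_mem' := fun z => by rw [add_zero]
      neg_mem' := fun hv z => by rw [← hv (z + _), neg_add_cancel_right] }
  have hsingle (i : Fin k) : Pi.single i (2 * π) ∈ periods := fun z => by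
    convert hF z i using 2
    ext j
    rcases eq_or_ne j i with rfl | hj <;> simp [*]
  have hsum : (fun i => n i * (2 * π)) = ∑ i, n i • Pi.single i (2 * π) := by
    ext j
    simp [Finset.sum_apply, Pi.single_apply]
  rw [hsum]
  exact periods.sum_mem (fun i _ => periods.zsmul_mem (hsingle i) (n i)) z

variable {E E' : Type*} [TopologicalSpace E] [TopologicalSpace E'] {ν : Fin k → ℝ}

lemma IsQuasiperiodic.comp {f : ℝ → E} (hf : IsQuasiperiodic ν f) {g : E → E'}
    (hg : Continuous g) : IsQuasiperiodic ν (g ∘ f) := by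
  obtain ⟨F, hFc, hFp, hFe⟩ := hf
  exact ⟨g ∘ F, hg.comp hFc, fun z i => congrArg g (hFp z i), fun θ => congrArg g (hFe θ)⟩

lemma IsQuasiperiodic.prodMk {f : ℝ → E} {g : ℝ → E'} (hf : IsQuasiperiodic ν f)
    (hg : IsQuasiperiodic ν g) : IsQuasiperiodic ν fun θ => (f θ, g θ) := by
  obtain ⟨F, hFc, hFp, hFe⟩ := hf
  obtain ⟨G, hGc, hGp, hGe⟩ := hg
  exact ⟨fun z => (F z, G z), hFc.prodMk hGc, fun z i => Prod.ext (hFp z i) (hGp z i),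
    fun θ => Prod.ext (hFe θ) (hGe θ)⟩

lemma IsQuasiperiodic.pi {ι : Type*} {X : ι → Type*} [∀ i, TopologicalSpace (X i)]
    {f : ℝ → ∀ i, X i} (hf : ∀ i, IsQuasiperiodic ν fun θ => f θ i) : IsQuasiperiodic ν f := by
  choose F hFc hFp hFe using hf
  exact ⟨fun z i => F i z, continuous_pi hFc, fun z j => funext fun i => hFp i z j,
    fun θ => funext fun i => hFe i θ⟩

lemma IsQuasiperiodic.matrix {m n : Type*} {U : ℝ → Matrix m n ℝ}
    (hU : ∀ i j, IsQuasiperiodic ν fun θ => U θ i j) : IsQuasiperiodic ν U :=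
  .pi fun i => .pi fun j => hU i j

end Quasiperiodic

section Torus

variable {k : ℕ}

def torusProj (k : ℕ) : C(Fin k → ℝ, UnitAddTorus (Fin k)) :=
  ⟨fun x i => (((2 * π)⁻¹ * x i : ℝ) : UnitAddCircle), by fun_prop⟩

lemma isOpenQuotientMap_torusProj : IsOpenQuotientMap (torusProj k) :=
  IsOpenQuotientMap.piMap fun _ => QuotientAddGroup.isOpenQuotientMap_mk.comp
    (Homeomorph.mulLeft₀ _ (by positivity)).isOpenQuotientMap

lemma exists_intCast_mul_of_torusProj_eq {x y : Fin k → ℝ} (h : torusProj k x = torusProj k y) :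
    ∃ n : Fin k → ℤ, y = x + fun i => n i * (2 * π) := by
  have hcoord (i : Fin k) : ∃ n : ℤ, y i = x i + n * (2 * π) := by
    obtain ⟨n, hn⟩ := AddSubgroup.mem_zmultiples_iff.mp (QuotientAddGroup.eq.mp (congrFun h i))
    refine ⟨n, ?_⟩
    rw [zsmul_one] at hn
    field_simp at hn
    linarith
  choose n hn using hcoord
  exact ⟨n, funext hn⟩

lemma IsQuasiperiodic.exists_torus {E : Type*} [TopologicalSpace E] {ν : Fin k → ℝ} {f : ℝ → E}
    (hf : IsQuasiperiodic ν f) :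
    ∃ G : C(UnitAddTorus (Fin k), E), ∀ θ, f θ = G (torusProj k fun i => ν i * θ) := by
  obtain ⟨F, hFc, hFp, hFe⟩ := hf
  have hfactor : Function.FactorsThrough F (torusProj k) := fun x y h => by
    obtain ⟨n, rfl⟩ := exists_intCast_mul_of_torusProj_eq h
    exact (hFp.apply_add_intCast_mul x n).symm
  have hq := (isOpenQuotientMap_torusProj (k := k)).isQuotientMap
  refine ⟨hq.lift ⟨F, hFc⟩ hfactor, fun θ => ?_⟩
  rw [hFe]
  exact (DFunLike.congr_fun (hq.lift_comp ⟨F, hFc⟩ hfactor) _).symm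

lemma zdot_mul_right (m : Fin k → ℤ) (v : Fin k → ℝ) (θ : ℝ) :
    zdot m (fun i => v i * θ) = zdot m v * θ := by
  simp only [zdot, Finset.sum_mul, mul_assoc]

lemma mFourier_torusProj (n : Fin k → ℤ) (x : Fin k → ℝ) :
    UnitAddTorus.mFourier n (torusProj k x) = exp (↑(zdot n x) * I) := by
  simp only [UnitAddTorus.mFourier, torusProj, ContinuousMap.coe_mk, fourier_coe_apply, zdot]
  rw [← Complex.exp_sum]
  push_cast
  rw [Finset.sum_mul]
  refine congrArg cexp (Finset.sum_congr rfl fun i _ => ?_)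
  field_simp

end Torus

section TwistedMean

def twistedMean (α : ℝ) (g : ℝ → ℂ) (T : ℝ) : ℂ :=
  (∫ θ in (0 : ℝ)..T, g θ * exp (↑(-(α * θ)) * I)) / T

variable {α : ℝ}

lemma Continuous.intervalIntegrable_mul_exp {g : ℝ → ℂ} (hg : Continuous g) (α T : ℝ) :
    IntervalIntegrable (fun θ => g θ * exp (↑(-(α * θ)) * I)) volume 0 T :=
  (hg.mul (by fun_prop)).intervalIntegrable 0 T

lemma twistedMean_add {g h : ℝ → ℂ} (hg : Continuous g) (hh : Continuous h) :
    twistedMean α (fun θ => g θ + h θ) = fun T => twistedMean α g T + twistedMean α h T := by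
  funext T
  simp only [twistedMean, add_mul, ← add_div, intervalIntegral.integral_add
    (hg.intervalIntegrable_mul_exp α T) (hh.intervalIntegrable_mul_exp α T)]

lemma twistedMean_const_mul (c : ℂ) (g : ℝ → ℂ) :
    twistedMean α (fun θ => c * g θ) = fun T => c * twistedMean α g T := by
  funext T
  simp only [twistedMean, mul_assoc, intervalIntegral.integral_const_mul, mul_div_assoc]

lemma norm_twistedMean_sub_le {g h : ℝ → ℂ} (hg : Continuous g) (hh : Continuous h) {δ : ℝ}
    (hδ : ∀ θ, ‖g θ - h θ‖ ≤ δ) {T : ℝ} (hT : 0 < T) :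
    ‖twistedMean α g T - twistedMean α h T‖ ≤ δ := by
  rw [twistedMean, twistedMean, div_sub_div_same, ← intervalIntegral.integral_sub
    (hg.intervalIntegrable_mul_exp α T) (hh.intervalIntegrable_mul_exp α T), norm_div, norm_real,
    Real.norm_of_nonneg hT.le, div_le_iff₀ hT]
  calc _ ≤ δ * |T - 0| := intervalIntegral.norm_integral_le_of_norm_le_const fun θ _ => by
        rw [← sub_mul, norm_mul, norm_exp_ofReal_mul_I, mul_one]
        exact hδ θ
    _ = δ * T := by rw [sub_zero, abs_of_pos hT]

lemma twistedMean_const_mul_exp (z : ℂ) {T : ℝ} (hT : T ≠ 0) :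
    twistedMean α (fun θ => z * exp (↑(α * θ) * I)) T = z := by
  have hconst (θ : ℝ) : z * exp (↑(α * θ) * I) * exp (↑(-(α * θ)) * I) = z := by
    rw [mul_assoc, ← Complex.exp_add, ofReal_neg, neg_mul, add_neg_cancel, Complex.exp_zero,
      mul_one]
  simp only [twistedMean, hconst, intervalIntegral.integral_const, sub_zero, real_smul]
  exact mul_div_cancel_left₀ z (ofReal_ne_zero.mpr hT)

lemma tendsto_twistedMean_exp {β : ℝ} (hβ : β ≠ α) :
    Tendsto (twistedMean α fun θ => exp (↑(β * θ) * I)) atTop (𝓝 0) := by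
  set c : ℂ := ↑(β - α) * I with hc_def
  have hc : c ≠ 0 := mul_ne_zero (ofReal_ne_zero.mpr (sub_ne_zero.mpr hβ)) I_ne_zero
  have hintegral (T : ℝ) :
      ∫ θ in (0 : ℝ)..T, exp (↑(β * θ) * I) * exp (↑(-(α * θ)) * I) = (exp (c * T) - 1) / c := by
    have hexp (θ : ℝ) : exp (↑(β * θ) * I) * exp (↑(-(α * θ)) * I) = exp (c * θ) := by
      rw [← Complex.exp_add, hc_def]
      congr 1
      push_cast
      ring
    simp only [hexp, integral_exp_mul_complex hc, ofReal_zero, mul_zero, Complex.exp_zero]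
  have hbound (T : ℝ) (hT : 1 ≤ T) :
      ‖twistedMean α (fun θ => exp (↑(β * θ) * I)) T‖ ≤ 2 / ‖c‖ / T := by
    have hnum : ‖exp (c * T) - 1‖ ≤ 2 :=
      calc ‖exp (c * T) - 1‖ ≤ ‖exp (c * T)‖ + ‖(1 : ℂ)‖ := norm_sub_le _ _
        _ = 2 := by
          rw [show c * T = ↑((β - α) * T) * I by rw [hc_def]; push_cast; ring,
            norm_exp_ofReal_mul_I, norm_one]
          norm_num
    rw [twistedMean, hintegral, norm_div, norm_div, norm_real, Real.norm_of_nonneg (by linarith)]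
    gcongr
  exact squeeze_zero_norm' (eventually_atTop.mpr ⟨1, hbound⟩)
    (tendsto_const_nhds.div_atTop tendsto_id)

lemma tendsto_twistedMean_of_mem_span {k : ℕ} {ν : Fin k → ℝ} (hα : ∀ n, α ≠ zdot n ν)
    {P : C(UnitAddTorus (Fin k), ℂ)}
    (hP : P ∈ Submodule.span ℂ (Set.range UnitAddTorus.mFourier)) :
    Tendsto (twistedMean α fun θ => P (torusProj k fun i => ν i * θ)) atTop (𝓝 0) := by
  have hcont (Q : C(UnitAddTorus (Fin k), ℂ)) :
      Continuous fun θ => Q (torusProj k fun i => ν i * θ) := by fun_prop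
  induction hP using Submodule.span_induction with
  | mem P hP =>
    obtain ⟨n, rfl⟩ := hP
    simp only [mFourier_torusProj, zdot_mul_right]
    exact tendsto_twistedMean_exp (hα n).symm
  | zero =>
    convert tendsto_const_nhds (x := (0 : ℂ)) using 1
    funext T
    simp [twistedMean]
  | add P Q _ _ hP hQ =>
    simp only [ContinuousMap.add_apply, twistedMean_add (hcont P) (hcont Q)]
    simpa only [add_zero] using hP.add hQ
  | smul c P _ hP =>
    simp only [ContinuousMap.smul_apply, smul_eq_mul, twistedMean_const_mul]
    simpa using hP.const_mul c

end TwistedMean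

lemma exists_zdot_eq_of_isQuasiperiodic {k : ℕ} {ν : Fin k → ℝ} {α : ℝ} {z : ℂ} (hz : z ≠ 0)
    (h : IsQuasiperiodic ν fun θ => z * exp (↑(α * θ) * I)) : ∃ m, α = zdot m ν := by
  by_contra! hα
  obtain ⟨G, hG⟩ := h.exists_torus
  have hdense : G ∈ (Submodule.span ℂ (Set.range UnitAddTorus.mFourier)).topologicalClosure := by
    rw [UnitAddTorus.span_mFourier_closure_eq_top]; trivial
  obtain ⟨P, hP, hGP⟩ := Metric.mem_closure_iff.mp hdense (‖z‖ / 2) (by positivity)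
  have hmeanG (T : ℝ) (hT : 0 < T) :
      twistedMean α (fun θ => G (torusProj k fun i => ν i * θ)) T = z := by
    simp only [← hG]
    exact twistedMean_const_mul_exp z hT.ne'
  have hclose (T : ℝ) (hT : 0 < T) :
      ‖z - twistedMean α (fun θ => P (torusProj k fun i => ν i * θ)) T‖ ≤ dist G P := by
    rw [← hmeanG T hT]
    exact norm_twistedMean_sub_le (by fun_prop) (by fun_prop)
      (fun θ => (dist_eq_norm _ _).symm.trans_le (ContinuousMap.dist_apply_le_dist _)) hT
  have hlim : Tendsto (fun T => ‖z - twistedMean α (fun θ => P (torusProj k fun i => ν i * θ)) T‖)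
      atTop (𝓝 ‖z‖) := by
    simpa using (tendsto_const_nhds.sub (tendsto_twistedMean_of_mem_span hα hP)).norm
  have hzGP : ‖z‖ ≤ dist G P := le_of_tendsto hlim ((eventually_gt_atTop 0).mono hclose)
  linarith [norm_pos_iff.mpr hz]

theorem proper_UPRs_equivalent_general {d : ℕ} (ω : Fin d → ℝ)
    (Φ : ℝ → Matrix (Fin 3) (Fin 3) ℝ)
    (U Uh : ℝ → Matrix (Fin 3) (Fin 3) ℝ)
    (hUSO3 : ∀ θ, U θ ∈ SO3) (hUhSO3 : ∀ θ, Uh θ ∈ SO3)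
    (hUqp : ∀ i j, IsQuasiperiodic (oneOmega ω) fun θ => U θ i j)
    (hUhqp : ∀ i j, IsQuasiperiodic (oneOmega ω) fun θ => Uh θ i j)
    (νU νUh : ℝ)
    (hrepU : ∀ θ, Φ θ = U θ * NormedSpace.exp ((νU * θ) • Jmat) * (U 0).transpose)
    (hrepUh : ∀ θ, Φ θ = Uh θ * NormedSpace.exp ((νUh * θ) • Jmat) * (Uh 0).transpose) :
    ∃ (ε : ℝ) (m : Fin (d + 1) → ℤ), (ε = 1 ∨ ε = -1) ∧
      νUh = ε * νU + zdot m (oneOmega ω) := by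
  set C := (Uh 0).transpose * U 0
  have hC : C.transpose * C = 1 := transpose_mul_transpose_mul_self (hUhSO3 0).1 (hUSO3 0).1
  have hW (θ : ℝ) : (Uh θ).transpose * U θ = rotZ (νUh * θ) * C * rotZ (-(νU * θ)) :=
    mul_eq_mul_mul_of_mul_mul_eq (hUhSO3 θ).1 (hUSO3 0).1 (rotZ_mul_rotZ_neg _) <| by
      rw [← exp_smul_Jmat, ← exp_smul_Jmat, ← hrepU, ← hrepUh]
  have hqp {g : Matrix (Fin 3) (Fin 3) ℝ → ℂ} (hg : Continuous g) :
      IsQuasiperiodic (oneOmega ω) fun θ => g ((Uh θ).transpose * U θ) :=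
    ((IsQuasiperiodic.matrix hUqp).prodMk (IsQuasiperiodic.matrix hUhqp)).comp
      (g := fun p => g (p.2.transpose * p.1)) (hg.comp (by fun_prop))
  rcases zPlus_ne_zero_or_zMinus_ne_zero hC with hz | hz
  · obtain ⟨m, hm⟩ := exists_zdot_eq_of_isQuasiperiodic hz (α := νUh - νU) <| by
      simpa only [hW, zPlus_rotZ_mul_mul_rotZ, sub_mul] using hqp continuous_zPlus
    exact ⟨1, m, Or.inl rfl, by linarith⟩
  · obtain ⟨m, hm⟩ := exists_zdot_eq_of_isQuasiperiodic hz (α := νUh + νU) <| by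
      simpa only [hW, zMinus_rotZ_mul_mul_rotZ, add_mul] using hqp continuous_zMinus
    exact ⟨-1, m, Or.inr rfl, by linarith⟩

/-- Theorem 5.3. -/
theorem proper_UPRs_equivalent {d : ℕ} (hd : 1 ≤ d) (ω : Fin d → ℝ)
    (A : ℝ → Matrix (Fin 3) (Fin 3) ℝ)
    (hAcont : ∀ i j, Continuous fun θ => A θ i j)
    (hAskew : ∀ θ, (A θ).transpose = -(A θ))
    (Φ : ℝ → Matrix (Fin 3) (Fin 3) ℝ) (hΦ0 : Φ 0 = 1)
    (hΦ : ∀ (θ : ℝ) (i j : Fin 3), HasDerivAt (fun t => Φ t i j) ((A θ * Φ θ) i j) θ)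
    (U Uh : ℝ → Matrix (Fin 3) (Fin 3) ℝ)
    (hUSO3 : ∀ θ, U θ ∈ SO3) (hUhSO3 : ∀ θ, Uh θ ∈ SO3)
    (hUqp : ∀ i j, IsQuasiperiodic (oneOmega ω) fun θ => U θ i j)
    (hUhqp : ∀ i j, IsQuasiperiodic (oneOmega ω) fun θ => Uh θ i j)
    (νU νUh : ℝ) (hνU : νU ∈ Set.Ico (0 : ℝ) 1) (hνUh : νUh ∈ Set.Ico (0 : ℝ) 1)
    (hrepU : ∀ θ, Φ θ = U θ * NormedSpace.exp ((νU * θ) • Jmat) * (U 0).transpose)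
    (hrepUh : ∀ θ, Φ θ = Uh θ * NormedSpace.exp ((νUh * θ) • Jmat) * (Uh 0).transpose) :
    ∃ (ε : ℝ) (m : Fin (d + 1) → ℤ), (ε = 1 ∨ ε = -1) ∧
      νUh = ε * νU + zdot m (oneOmega ω) :=
  proper_UPRs_equivalent_general ω Φ U Uh hUSO3 hUhSO3 hUqp hUhqp νU νUh hrepU hrepUh
end
end

section
/- In the spin-orbit setting, suppose there exists a uniform invariant frame field 𝒱 with constant precession rate ν = C_𝒱 ∈ [0,1). Then for every φ₀ ∈ ℝ^d, the map U(θ) := 𝒱(θ, φ₀ + ωθ) satisfies Φ(θ;φ₀) = U(θ) exp(𝒥νθ) U(0)ᵀ for all θ ∈ ℝ, and U is entrywise quasiperiodic with tune vector (1,ω) ∈ ℝ^{d+1}; that is, U is a proper uniform precession frame at φ₀ with uniform precession rate ν, the same ν for every φ₀. -/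
open MeasureTheory Filter
noncomputable section

/-!
Along the orbit `θ ↦ (θ, φ₀ + ωθ)` the derivation `𝒟` is the ordinary `θ`-derivative, so
`U(θ) = 𝒱(θ, φ₀ + ωθ)` solves `U' = 𝒜U − νU𝒥`. Since `𝒜` and `𝒥` are skew, the matrix
`exp(−νθ𝒥) U(θ)ᵀ Φ(θ)` has zero derivative, hence equals its value `U(0)ᵀ` at `θ = 0`; solving
for `Φ` uses `UUᵀ = 1`. Quasiperiodicity is immediate from periodicity of `𝒱`, with hull function
`z ↦ 𝒱(z₀, φ₀ + (z₁, …, z_d))`.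
-/

open scoped Matrix

lemma Jmat_transpose : Jmatᵀ = -Jmat := by
  ext i j
  fin_cases i <;> fin_cases j <;> simp [Jmat]

section MatrixCalculus

variable {n : Type*} [Fintype n]

lemma hasDerivAt_matrix_mul_apply {m o : Type*} {A : ℝ → Matrix m n ℝ} {B : ℝ → Matrix n o ℝ}
    {A' : Matrix m n ℝ} {B' : Matrix n o ℝ} {θ : ℝ}
    (hA : ∀ i j, HasDerivAt (fun t => A t i j) (A' i j) θ)
    (hB : ∀ i j, HasDerivAt (fun t => B t i j) (B' i j) θ) (i : m) (j : o) :
    HasDerivAt (fun t => (A t * B t) i j) ((A' * B θ + A θ * B') i j) θ := by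
  simpa [Matrix.mul_apply, Finset.sum_add_distrib] using
    HasDerivAt.fun_sum fun k _ => (hA i k).mul (hB k j)

variable [DecidableEq n]

open scoped Matrix.Norms.Operator in
lemma hasDerivAt_exp_smul_apply (c : ℝ) (M : Matrix n n ℝ) (θ : ℝ) (i j : n) :
    HasDerivAt (fun t : ℝ => NormedSpace.exp ((c * t) • M) i j)
      ((c • (NormedSpace.exp ((c * θ) • M) * M)) i j) θ := by
  have hexp : HasDerivAt (fun t : ℝ => NormedSpace.exp ((c * t) • M))
      (c • (NormedSpace.exp ((c * θ) • M) * M)) θ :=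
    (hasDerivAt_exp_smul_const M (c * θ)).scomp θ ((hasDerivAt_id θ).const_mul c |>.congr_deriv
      (mul_one c))
  exact (Matrix.entryLinearMap ℝ ℝ i j).toContinuousLinearMap.hasFDerivAt.comp_hasDerivAt θ hexp

lemma exp_smul_mul_exp_smul_neg (a : ℝ) (M : Matrix n n ℝ) :
    NormedSpace.exp (a • M) * NormedSpace.exp (a • -M) = 1 := by
  rw [← Matrix.exp_add_of_commute _ _ ((Commute.refl M).neg_right.smul_left a |>.smul_right a),
    smul_neg, add_neg_cancel, NormedSpace.exp_zero]

variable {A U Φ : ℝ → Matrix n n ℝ} {J : Matrix n n ℝ} {ν : ℝ}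

lemma hasDerivAt_exp_smul_neg_mul_transpose_mul_apply (hA : ∀ t, (A t)ᵀ = -A t) (hJ : Jᵀ = -J)
    (hU : ∀ t i j, HasDerivAt (fun s => U s i j) ((A t * U t - ν • (U t * J)) i j) t)
    (hΦ : ∀ t i j, HasDerivAt (fun s => Φ s i j) ((A t * Φ t) i j) t) (θ : ℝ) (i j : n) :
    HasDerivAt (fun t => (NormedSpace.exp ((ν * t) • -J) * (U t)ᵀ * Φ t) i j) 0 θ := by
  have hUt : ∀ i j, HasDerivAt (fun t => (U t)ᵀ i j) ((A θ * U θ - ν • (U θ * J))ᵀ i j) θ :=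
    fun i j => hU θ j i
  have hzero : (ν • (NormedSpace.exp ((ν * θ) • -J) * -J) * (U θ)ᵀ +
      NormedSpace.exp ((ν * θ) • -J) * (A θ * U θ - ν • (U θ * J))ᵀ) * Φ θ +
      NormedSpace.exp ((ν * θ) • -J) * (U θ)ᵀ * (A θ * Φ θ) = 0 := by
    simp only [Matrix.transpose_sub, Matrix.transpose_mul, Matrix.transpose_smul, hA, hJ,
      Matrix.mul_neg, Matrix.neg_mul, Matrix.mul_smul, Matrix.smul_mul, Matrix.add_mul,
      Matrix.mul_add, ← Matrix.mul_assoc, smul_neg, sub_neg_eq_add]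
    abel
  have h := hasDerivAt_matrix_mul_apply
    (hasDerivAt_matrix_mul_apply (hasDerivAt_exp_smul_apply ν (-J) θ) hUt) (hΦ θ) i j
  rwa [hzero, Matrix.zero_apply] at h

lemma exp_smul_neg_mul_transpose_mul_eq (hA : ∀ t, (A t)ᵀ = -A t) (hJ : Jᵀ = -J)
    (hU : ∀ t i j, HasDerivAt (fun s => U s i j) ((A t * U t - ν • (U t * J)) i j) t)
    (hΦ0 : Φ 0 = 1) (hΦ : ∀ t i j, HasDerivAt (fun s => Φ s i j) ((A t * Φ t) i j) t) (θ : ℝ) :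
    NormedSpace.exp ((ν * θ) • -J) * (U θ)ᵀ * Φ θ = (U 0)ᵀ := by
  have hderiv := hasDerivAt_exp_smul_neg_mul_transpose_mul_apply hA hJ hU hΦ
  ext i j
  have hconst := is_const_of_deriv_eq_zero (fun t => (hderiv t i j).differentiableAt)
    (fun t => (hderiv t i j).deriv) θ 0
  simpa [hΦ0, NormedSpace.exp_zero] using hconst

theorem eq_mul_exp_smul_mul_transpose (hA : ∀ t, (A t)ᵀ = -A t) (hJ : Jᵀ = -J)
    (hUorth : ∀ t, (U t)ᵀ * U t = 1)
    (hU : ∀ t i j, HasDerivAt (fun s => U s i j) ((A t * U t - ν • (U t * J)) i j) t)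
    (hΦ0 : Φ 0 = 1) (hΦ : ∀ t i j, HasDerivAt (fun s => Φ s i j) ((A t * Φ t) i j) t) (θ : ℝ) :
    Φ θ = U θ * NormedSpace.exp ((ν * θ) • J) * (U 0)ᵀ := by
  set E := NormedSpace.exp ((ν * θ) • J)
  set E' := NormedSpace.exp ((ν * θ) • -J)
  calc Φ θ = U θ * (E * E') * ((U θ)ᵀ * Φ θ) := by
        rw [exp_smul_mul_exp_smul_neg, Matrix.mul_one, ← Matrix.mul_assoc,
          mul_eq_one_comm.mp (hUorth θ), Matrix.one_mul]
    _ = U θ * E * (E' * (U θ)ᵀ * Φ θ) := by simp only [Matrix.mul_assoc]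
    _ = U θ * E * (U 0)ᵀ := by rw [exp_smul_neg_mul_transpose_mul_eq hA hJ hU hΦ0 hΦ]

end MatrixCalculus

section Orbit

variable {d : ℕ} (ω φ₀ : Fin d → ℝ)

lemma hasDerivAt_comp_orbit {f : Pt d → ℝ} (hf : Differentiable ℝ f) (θ : ℝ) :
    HasDerivAt (fun t => f (t, fun l => φ₀ l + ω l * t))
      (fderiv ℝ f (θ, fun l => φ₀ l + ω l * θ) (1, ω)) θ := by
  have horbit : HasDerivAt (fun t : ℝ => ((t, fun l => φ₀ l + ω l * t) : Pt d)) (1, ω) θ :=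
    (hasDerivAt_id θ).prodMk (hasDerivAt_pi.2 fun l => by
      simpa using ((hasDerivAt_id θ).const_mul (ω l)).const_add (φ₀ l))
  exact (hf _).hasFDerivAt.comp_hasDerivAt θ horbit

lemma IsUniformIFF.hasDerivAt_orbit_apply {𝒜 𝒱 : Pt d → Matrix (Fin 3) (Fin 3) ℝ} {ν : ℝ}
    (h𝒱 : IsUniformIFF ω 𝒜 𝒱 ν) (θ : ℝ) (i j : Fin 3) :
    HasDerivAt (fun t => 𝒱 (t, fun l => φ₀ l + ω l * t) i j)
      ((𝒜 (θ, fun l => φ₀ l + ω l * θ) * 𝒱 (θ, fun l => φ₀ l + ω l * θ) -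
        ν • (𝒱 (θ, fun l => φ₀ l + ω l * θ) * Jmat)) i j) θ := by
  rw [← h𝒱.2.2.2.2]
  exact hasDerivAt_comp_orbit ω φ₀ ((h𝒱.1 i j).differentiable one_ne_zero) θ

lemma PeriodicPt.comp {E F : Type*} {f : Pt d → E} (hf : PeriodicPt f) (g : E → F) :
    PeriodicPt (g ∘ f) :=
  ⟨fun p => congrArg g (hf.1 p), fun p i => congrArg g (hf.2 p i)⟩

lemma PeriodicPt.periodic2Pi_hull {E : Type*} {f : Pt d → E} (hf : PeriodicPt f) :
    Periodic2Pi fun z : Fin (d + 1) → ℝ => f (z 0, φ₀ + Fin.tail z) := by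
  intro z k
  induction k using Fin.cases with
  | zero => simpa [Fin.tail_update_zero] using hf.1 (z 0, φ₀ + Fin.tail z)
  | succ m =>
    have hshift : φ₀ + Function.update (Fin.tail z) m (z m.succ + 2 * Real.pi) =
        Function.update (φ₀ + Fin.tail z) m ((φ₀ + Fin.tail z) m + 2 * Real.pi) := by
      ext l
      rcases eq_or_ne l m with rfl | hl
      · simp [Fin.tail, add_assoc]
      · simp [hl]
    simpa [Fin.tail_update_succ, hshift, Function.update_of_ne (Fin.succ_ne_zero m).symm] using
      hf.2 (z 0, φ₀ + Fin.tail z) m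

lemma PeriodicPt.isQuasiperiodic_orbit {E : Type*} [TopologicalSpace E] {f : Pt d → E}
    (hf : PeriodicPt f) (hcont : Continuous f) :
    IsQuasiperiodic (oneOmega ω) fun θ => f (θ, fun l => φ₀ l + ω l * θ) := by
  refine ⟨fun z => f (z 0, φ₀ + Fin.tail z), ?_, hf.periodic2Pi_hull φ₀, fun θ => ?_⟩
  · fun_prop
  · simp [oneOmega, Fin.tail, Pi.add_def]

end Orbit

theorem uniform_IFF_gives_proper_UPF_general {d : ℕ} (ω : Fin d → ℝ)
    (𝒜 : Pt d → Matrix (Fin 3) (Fin 3) ℝ)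
    (h𝒜skew : ∀ p, (𝒜 p).transpose = -(𝒜 p))
    (𝒱 : Pt d → Matrix (Fin 3) (Fin 3) ℝ) (ν : ℝ)
    (h𝒱 : IsUniformIFF ω 𝒜 𝒱 ν)
    (φ₀ : Fin d → ℝ) (Φ : ℝ → Matrix (Fin 3) (Fin 3) ℝ)
    (hΦ : IsPrincipalSolution ω 𝒜 φ₀ Φ) :
    (∀ θ : ℝ, Φ θ = 𝒱 (θ, fun l => φ₀ l + ω l * θ) * NormedSpace.exp ((ν * θ) • Jmat) *
      (𝒱 (0, fun l => φ₀ l + ω l * 0)).transpose) ∧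
    ∀ i j, IsQuasiperiodic (oneOmega ω) fun θ => 𝒱 (θ, fun l => φ₀ l + ω l * θ) i j := by
  have hΦ' : ∀ t i j, HasDerivAt (fun s => Φ s i j)
      ((𝒜 (t, fun l => φ₀ l + ω l * t) * Φ t) i j) t := fun t i j => by
    simpa only [add_comm] using hΦ.2 t i j
  refine ⟨eq_mul_exp_smul_mul_transpose (fun _ => h𝒜skew _) Jmat_transpose
    (fun _ => (h𝒱.2.2.1 _).1) (h𝒱.hasDerivAt_orbit_apply ω φ₀) hΦ.1 hΦ', fun i j => ?_⟩
  exact (h𝒱.2.1.comp fun M => M i j).isQuasiperiodic_orbit ω φ₀ (h𝒱.1 i j).continuous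

/-- Theorem 6.3a. -/
theorem uniform_IFF_gives_proper_UPF {d : ℕ} (hd : 1 ≤ d) (ω : Fin d → ℝ)
    (𝒜 : Pt d → Matrix (Fin 3) (Fin 3) ℝ)
    (h𝒜s : SmoothMat 1 𝒜) (h𝒜skew : ∀ p, (𝒜 p).transpose = -(𝒜 p))
    (h𝒜per : PeriodicPt 𝒜)
    (𝒱 : Pt d → Matrix (Fin 3) (Fin 3) ℝ) (ν : ℝ)
    (h𝒱 : IsUniformIFF ω 𝒜 𝒱 ν)
    (φ₀ : Fin d → ℝ) (Φ : ℝ → Matrix (Fin 3) (Fin 3) ℝ)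
    (hΦ : IsPrincipalSolution ω 𝒜 φ₀ Φ) :
    (∀ θ : ℝ, Φ θ = 𝒱 (θ, fun l => φ₀ l + ω l * θ) * NormedSpace.exp ((ν * θ) • Jmat) *
      (𝒱 (0, fun l => φ₀ l + ω l * 0)).transpose) ∧
    ∀ i j, IsQuasiperiodic (oneOmega ω) fun θ => 𝒱 (θ, fun l => φ₀ l + ω l * θ) i j :=
  uniform_IFF_gives_proper_UPF_general ω 𝒜 h𝒜skew 𝒱 ν h𝒱 φ₀ Φ hΦ
end
end
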